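/- For every complex number q with 0 < |q| < 1, Σ_{m=0}^∞ (−1)^m q^{m^2} / (−q^2;q^2)_{m+1} = −q + (1+q)·φ_3(−q). -/

import Mathlib

/-!
Write `b m = (-q)^(m²) / (-q²;q²)_m` for the terms of `φ₃(-q)`. Since
`(-q²;q²)_(m+1) = (-q²;q²)_m (1 + q^(2m+2))`, the `m`-th term on the left equals `b m + q b (m+1)`,
so the left side is `(1 + q) φ₃(-q) - q b 0`. Absolute convergence comes from
`|(a;p)_n| ≥ (1 - |a|)^n`, which makes `|b m| ≤ (|q|^m / (1 - |q|²))^m`.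
-/

open scoped BigOperators

/-- Finite q-Pochhammer symbol `(a; q)_n`. -/
noncomputable def qPoch (a q : ℂ) (n : ℕ) : ℂ := ∏ j ∈ Finset.range n, (1 - a * q ^ j)

/-- The third order mock theta function `φ₃`. -/
noncomputable def phi3 (q : ℂ) : ℂ := ∑' n : ℕ, q ^ (n ^ 2) / qPoch (-q ^ 2) (q ^ 2) n

lemma qPoch_zero (a q : ℂ) : qPoch a q 0 = 1 :=
  Finset.prod_range_zero _

lemma qPoch_succ (a q : ℂ) (n : ℕ) : qPoch a q (n + 1) = qPoch a q n * (1 - a * q ^ n) :=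
  Finset.prod_range_succ _ n

lemma one_sub_norm_pow_le_norm_qPoch {a q : ℂ} (ha : ‖a‖ ≤ 1) (hq : ‖q‖ ≤ 1) (n : ℕ) :
    (1 - ‖a‖) ^ n ≤ ‖qPoch a q n‖ := by
  rw [qPoch, norm_prod]
  calc (1 - ‖a‖) ^ n = ∏ _j ∈ Finset.range n, (1 - ‖a‖) := by simp
    _ ≤ ∏ j ∈ Finset.range n, ‖1 - a * q ^ j‖ := by
      refine Finset.prod_le_prod (fun _ _ ↦ by linarith) fun j _ ↦ ?_
      calc 1 - ‖a‖ ≤ ‖(1 : ℂ)‖ - ‖a * q ^ j‖ := by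
            rw [norm_one, norm_mul, norm_pow]
            have : ‖q‖ ^ j ≤ 1 := pow_le_one₀ (norm_nonneg q) hq
            nlinarith [norm_nonneg a]
        _ ≤ ‖1 - a * q ^ j‖ := norm_sub_norm_le _ _

lemma qPoch_ne_zero {a q : ℂ} (ha : ‖a‖ < 1) (hq : ‖q‖ ≤ 1) (n : ℕ) : qPoch a q n ≠ 0 :=
  norm_pos_iff.mp <|
    (pow_pos (sub_pos.mpr ha) n).trans_le (one_sub_norm_pow_le_norm_qPoch ha.le hq n)

lemma summable_pow_sq_div_qPoch {q a p : ℂ} (hq : ‖q‖ < 1) (ha : ‖a‖ < 1) (hp : ‖p‖ ≤ 1) :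
    Summable fun n : ℕ ↦ q ^ (n ^ 2) / qPoch a p n := by
  set r := ‖q‖
  have hc : 0 < 1 - ‖a‖ := sub_pos.mpr ha
  obtain ⟨M, hM⟩ := exists_pow_lt_of_lt_one (half_pos hc) hq
  refine Summable.of_norm_bounded_eventually_nat (g := fun n ↦ (1 / 2 : ℝ) ^ n)
    (summable_geometric_of_lt_one (by norm_num) (by norm_num)) ?_
  filter_upwards [Filter.eventually_ge_atTop M] with n hn
  have hrn : r ^ n ≤ (1 - ‖a‖) / 2 := (pow_le_pow_of_le_one (norm_nonneg q) hq.le hn).trans hM.le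
  calc ‖q ^ (n ^ 2) / qPoch a p n‖ ≤ r ^ (n ^ 2) / (1 - ‖a‖) ^ n := by
        rw [norm_div, norm_pow]
        exact div_le_div_of_nonneg_left (by positivity) (pow_pos hc n)
          (one_sub_norm_pow_le_norm_qPoch ha.le hp n)
    _ = (r ^ n / (1 - ‖a‖)) ^ n := by rw [div_pow, ← pow_mul, sq]
    _ ≤ (1 / 2) ^ n := by
        refine pow_le_pow_left₀ (by positivity) ?_ n
        rw [div_le_iff₀ hc]
        linarith

lemma tsum_add_mul_shift {f : ℕ → ℂ} (hf : Summable f) (c : ℂ) :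
    ∑' n, (f n + c * f (n + 1)) = (1 + c) * ∑' n, f n - c * f 0 := by
  rw [hf.tsum_add (((summable_nat_add_iff 1).mpr hf).mul_left c), tsum_mul_left,
    hf.tsum_eq_zero_add]
  ring

lemma neg_one_pow_sq (m : ℕ) : (-1 : ℂ) ^ (m ^ 2) = (-1) ^ m := by
  rcases Nat.even_or_odd m with h | h
  · rw [h.neg_one_pow, (h.pow_of_ne_zero two_ne_zero).neg_one_pow]
  · rw [h.neg_one_pow, h.pow.neg_one_pow]

lemma div_qPoch_succ_eq {q : ℂ} {m : ℕ} (hP : qPoch (-q ^ 2) (q ^ 2) (m + 1) ≠ 0) :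
    (-1) ^ m * q ^ (m ^ 2) / qPoch (-q ^ 2) (q ^ 2) (m + 1) =
      (-q) ^ (m ^ 2) / qPoch (-q ^ 2) (q ^ 2) m +
        q * ((-q) ^ ((m + 1) ^ 2) / qPoch (-q ^ 2) (q ^ 2) (m + 1)) := by
  rw [qPoch_succ] at hP ⊢
  have hPm := left_ne_zero_of_mul hP
  rw [neg_pow q, neg_pow q, neg_one_pow_sq, neg_one_pow_sq, ← mul_div_assoc, div_add_div _ _ hPm hP,
    div_eq_div_iff hP (mul_ne_zero hPm hP)]
  ring

theorem stmt19_general (q : ℂ) (h1 : ‖q‖ < 1) :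
    (∑' m : ℕ, (-1) ^ m * q ^ (m ^ 2) / qPoch (-q ^ 2) (q ^ 2) (m + 1)) =
      -q + (1 + q) * phi3 (-q) := by
  have hq2 : ‖q ^ 2‖ < 1 := by rw [norm_pow]; exact pow_lt_one₀ (norm_nonneg q) h1 two_ne_zero
  have hsum : Summable fun m : ℕ ↦ (-q) ^ (m ^ 2) / qPoch (-q ^ 2) (q ^ 2) m :=
    summable_pow_sq_div_qPoch (by rwa [norm_neg]) (by rwa [norm_neg]) hq2.le
  have hP := qPoch_ne_zero (by rwa [norm_neg]) hq2.le
  rw [tsum_congr fun m ↦ div_qPoch_succ_eq (hP (m + 1)), tsum_add_mul_shift hsum, phi3, neg_sq,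
    qPoch_zero, zero_pow two_ne_zero, pow_zero, div_one]
  ring

theorem stmt19 (q : ℂ) (h0 : 0 < ‖q‖) (h1 : ‖q‖ < 1) :
    (∑' m : ℕ, (-1) ^ m * q ^ (m ^ 2) / qPoch (-q ^ 2) (q ^ 2) (m + 1)) =
      -q + (1 + q) * phi3 (-q) :=
  stmt19_general q h1
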